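/- arXiv:1712.01971 — 4 statements merged into one kernel-verified Lean document; each statement's English description precedes it below -/
import Mathlib

section
/- Let x ∈ ℝⁿ, k a positive integer, and S ⊆ [n] a set containing every index i with |x_i| ≥ (1/k)‖x₋ₖ‖₁. Then the ℓ₁ norm of x restricted to the complement of S satisfies ‖x_{S̄}‖₁ ≤ 2‖x₋ₖ‖₁. -/
open Finset

theorem stmt2 (n k : ℕ) (hk : 1 ≤ k) (x : Fin n → ℝ) (S A : Finset (Fin n))
    (hA : A.card = k) (htop : ∀ i ∈ A, ∀ j ∉ A, |x j| ≤ |x i|)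
    (hS : ∀ i, (1 / (k : ℝ)) * ∑ j ∈ Aᶜ, |x j| ≤ |x i| → i ∈ S) :
    ∑ i ∈ Sᶜ, |x i| ≤ 2 * ∑ j ∈ Aᶜ, |x j| := by
  set T := ∑ j ∈ Aᶜ, |x j| with hT
  have hT0 : 0 ≤ T := Finset.sum_nonneg fun j _ => abs_nonneg _
  have hk0 : (0:ℝ) < (k:ℝ) := by exact_mod_cast hk
  have hbound : ∀ i ∈ Sᶜ, |x i| ≤ (1/(k:ℝ)) * T := by
    intro i hi
    by_contra h
    exact (Finset.mem_compl.mp hi) (hS i (le_of_not_ge h))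
  have split : Sᶜ = (Sᶜ ∩ A) ∪ (Sᶜ ∩ Aᶜ) := by
    rw [← Finset.inter_union_distrib_left, Finset.union_compl, Finset.inter_univ]
  rw [split, Finset.sum_union (by
    apply Finset.disjoint_left.mpr
    intro a ha hb
    exact (Finset.mem_compl.mp (Finset.mem_inter.mp hb).2) (Finset.mem_inter.mp ha).2)]
  have h1 : ∑ i ∈ Sᶜ ∩ A, |x i| ≤ T := by
    calc ∑ i ∈ Sᶜ ∩ A, |x i| ≤ ∑ i ∈ Sᶜ ∩ A, (1/(k:ℝ)) * T :=
          Finset.sum_le_sum fun i hi => hbound i (Finset.mem_inter.mp hi).1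
      _ = (Sᶜ ∩ A).card * ((1/(k:ℝ)) * T) := by rw [Finset.sum_const, nsmul_eq_mul]
      _ ≤ k * ((1/(k:ℝ)) * T) := by
          apply mul_le_mul_of_nonneg_right
          · exact_mod_cast hA ▸ Finset.card_le_card Finset.inter_subset_right
          · positivity
      _ = T := by field_simp
  have h2 : ∑ i ∈ Sᶜ ∩ Aᶜ, |x i| ≤ T :=
    Finset.sum_le_sum_of_subset_of_nonneg Finset.inter_subset_right
      (fun j _ _ => abs_nonneg _)
  linarith
end

section
/- Let x ∈ ℝⁿ be a nonnegative vector, f : [n] → [m] any function, and define v ∈ ℝᵐ by v_j = Σ_{i : f(i)=j} x_i. Then ‖v‖₁ = ‖x‖₁ and for every positive integer k, ‖v₋ₖ‖₁ ≤ ‖x₋ₖ‖₁. -/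
open Finset

theorem stmt3 (n m : ℕ) (x : Fin n → ℝ) (hx : ∀ i, 0 ≤ x i) (f : Fin n → Fin m)
    (v : Fin m → ℝ) (hv : ∀ j, v j = ∑ i ∈ univ.filter fun i => f i = j, x i) :
    (∑ j, |v j| = ∑ i, |x i|) ∧
    ∀ k : ℕ, 1 ≤ k →
      ∀ A : Finset (Fin n), A.card = k → (∀ i ∈ A, ∀ j ∉ A, |x j| ≤ |x i|) →
      ∀ B : Finset (Fin m), B.card = k → (∀ i ∈ B, ∀ j ∉ B, |v j| ≤ |v i|) →
        ∑ j ∈ Bᶜ, |v j| ≤ ∑ i ∈ Aᶜ, |x i| := by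
  have hvnn : ∀ j, 0 ≤ v j := fun j => by
    rw [hv j]; exact Finset.sum_nonneg fun i _ => hx i
  have habsv : ∀ j, |v j| = v j := fun j => abs_of_nonneg (hvnn j)
  have habsx : ∀ i, |x i| = x i := fun i => abs_of_nonneg (hx i)
  have htotal : ∑ j, v j = ∑ i, x i := by
    simp only [hv]
    rw [Finset.sum_fiberwise_eq_sum_filter univ univ f x]
    simp
  have hmain : ∑ j, |v j| = ∑ i, |x i| := by
    simp only [habsv, habsx]; exact htotal
  refine ⟨hmain, ?_⟩
  intro k hk A hA hAtop B hB hBtop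
  have key : ∑ i ∈ A, x i ≤ ∑ j ∈ B, v j := by
    set T := A.image f with hT
    have h1 : ∑ i ∈ A, x i ≤ ∑ j ∈ T, v j := by
      have hTv : ∑ j ∈ T, v j = ∑ i ∈ univ.filter (fun i => f i ∈ T), x i := by
        simp only [hv]
        exact Finset.sum_fiberwise_eq_sum_filter univ T f x
      rw [hTv]
      apply Finset.sum_le_sum_of_subset_of_nonneg
      · intro i hi
        simp only [mem_filter, mem_univ, true_and, hT]
        exact Finset.mem_image_of_mem f hi
      · intro i _ _; exact hx i
    have hcard : (T \ B).card ≤ (B \ T).card := by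
      have hTcard : T.card ≤ k := hA ▸ Finset.card_image_le
      have e1 := Finset.card_inter_add_card_sdiff T B
      have e2 := Finset.card_inter_add_card_sdiff B T
      rw [Finset.inter_comm] at e2
      omega
    have hdiff : ∑ j ∈ T \ B, v j ≤ ∑ j ∈ B \ T, v j := by
      rcases Finset.eq_empty_or_nonempty (T \ B) with he | hne
      · rw [he, Finset.sum_empty]
        exact Finset.sum_nonneg fun j _ => hvnn j
      · have hBTne : (B \ T).Nonempty := by
          rw [← Finset.card_pos]
          exact lt_of_lt_of_le (Finset.card_pos.mpr hne) hcard
        obtain ⟨i0, hi0, hmin⟩ := Finset.exists_min_image (B \ T) v hBTne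
        have hi0B : i0 ∈ B := (Finset.mem_sdiff.mp hi0).1
        calc ∑ j ∈ T \ B, v j ≤ (T \ B).card • v i0 := by
              apply Finset.sum_le_card_nsmul
              intro j hj
              have hjB : j ∉ B := (Finset.mem_sdiff.mp hj).2
              have := hBtop i0 hi0B j hjB
              rwa [habsv, habsv] at this
          _ ≤ (B \ T).card • v i0 := by
              apply nsmul_le_nsmul_left (hvnn i0) hcard
          _ ≤ ∑ j ∈ B \ T, v j := Finset.card_nsmul_le_sum _ _ _ hmin
    have h2 : ∑ j ∈ T, v j ≤ ∑ j ∈ B, v j := by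
      have e1 := Finset.sum_inter_add_sum_sdiff T B v
      have e2 := Finset.sum_inter_add_sum_sdiff B T v
      rw [Finset.inter_comm] at e2
      linarith
    linarith
  have e1 := Finset.sum_compl_add_sum B v
  have e2 := Finset.sum_compl_add_sum A x
  simp only [habsv, habsx]
  linarith [htotal]
end

section
/- Let x ∈ ℝⁿ be nonnegative, f : [n] → [m] any function, and v_j = Σ_{i : f(i)=j} x_i. If an index i satisfies x_i ≥ (1/k)‖x₋ₖ‖₁, then its bucket satisfies v_{f(i)} ≥ (1/k)‖v₋ₖ‖₁. -/
open Finset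

theorem stmt4 (n m k : ℕ) (hk : 1 ≤ k) (x : Fin n → ℝ) (hx : ∀ i, 0 ≤ x i)
    (f : Fin n → Fin m)
    (v : Fin m → ℝ) (hv : ∀ j, v j = ∑ i ∈ univ.filter fun i => f i = j, x i)
    (A : Finset (Fin n)) (hA : A.card = k) (htopA : ∀ i ∈ A, ∀ j ∉ A, |x j| ≤ |x i|)
    (B : Finset (Fin m)) (hB : B.card = k) (htopB : ∀ i ∈ B, ∀ j ∉ B, |v j| ≤ |v i|)
    (i : Fin n) (hi : (1 / (k : ℝ)) * ∑ j ∈ Aᶜ, |x j| ≤ x i) :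
    (1 / (k : ℝ)) * ∑ j ∈ Bᶜ, |v j| ≤ v (f i) := by
  have hvnn : ∀ j, 0 ≤ v j := by
    intro j; rw [hv]; exact Finset.sum_nonneg fun t _ => hx t
  -- x i ≤ v (f i)
  have hxiv : x i ≤ v (f i) := by
    rw [hv]
    exact Finset.single_le_sum (f := x) (fun t _ => hx t)
      (by simp)
  -- total sums equal
  have htot : ∑ j, v j = ∑ t, x t := by
    simp only [hv]
    exact Finset.sum_fiberwise univ f x
  set S := A.image f with hS
  -- ∑_A x ≤ ∑_S v
  have hAS : ∑ t ∈ A, x t ≤ ∑ j ∈ S, v j := by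
    have hmap : ∀ t ∈ A, f t ∈ S := fun t ht => Finset.mem_image_of_mem f ht
    rw [← Finset.sum_fiberwise_of_maps_to hmap x]
    apply Finset.sum_le_sum
    intro j hj
    rw [hv]
    apply Finset.sum_le_sum_of_subset_of_nonneg
    · intro t ht
      simp only [Finset.mem_filter] at ht ⊢
      exact ⟨Finset.mem_univ t, ht.2⟩
    · intro t _ _; exact hx t
  -- ∑_S v ≤ ∑_B v
  have hSB : ∑ j ∈ S, v j ≤ ∑ j ∈ B, v j := by
    have hcardS : S.card ≤ k := le_trans (Finset.card_image_le) (le_of_eq hA)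
    have hcard : (S \ B).card ≤ (B \ S).card := by
      have h1 : (S \ B).card + (S ∩ B).card = S.card := by
        rw [Finset.card_sdiff_add_card_inter]
      have h2 : (B \ S).card + (B ∩ S).card = B.card := by
        rw [Finset.card_sdiff_add_card_inter]
      rw [Finset.inter_comm] at h1
      omega
    have key : ∑ j ∈ S \ B, v j ≤ ∑ j ∈ B \ S, v j := by
      rcases (S \ B).eq_empty_or_nonempty with he | hne
      · rw [he]; simp
        exact Finset.sum_nonneg fun j _ => hvnn j
      · have hBSne : (B \ S).Nonempty := by
          rw [← Finset.card_pos] at hne ⊢; omega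
        obtain ⟨c, hcmem, hcmin⟩ := Finset.exists_min_image (B \ S) v hBSne
        have hcB : c ∈ B := (Finset.mem_sdiff.mp hcmem).1
        have h1 : ∑ j ∈ S \ B, v j ≤ (S \ B).card • v c := by
          apply Finset.sum_le_card_nsmul
          intro j hj
          have hjB : j ∉ B := (Finset.mem_sdiff.mp hj).2
          have := htopB c hcB j hjB
          rwa [abs_of_nonneg (hvnn j), abs_of_nonneg (hvnn c)] at this
        have h2 : (B \ S).card • v c ≤ ∑ j ∈ B \ S, v j := by
          apply Finset.card_nsmul_le_sum
          intro j hj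
          exact hcmin j hj
        calc ∑ j ∈ S \ B, v j ≤ (S \ B).card • v c := h1
          _ ≤ (B \ S).card • v c := by
              rcases le_or_gt 0 (v c) with h | h
              · exact nsmul_le_nsmul_left h hcard
              · exact absurd h (not_lt.mpr (hvnn c))
          _ ≤ ∑ j ∈ B \ S, v j := h2
    have e1 : ∑ j ∈ S ∩ B, v j + ∑ j ∈ S \ B, v j = ∑ j ∈ S, v j :=
      Finset.sum_inter_add_sum_sdiff S B v
    have e2 : ∑ j ∈ B ∩ S, v j + ∑ j ∈ B \ S, v j = ∑ j ∈ B, v j :=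
      Finset.sum_inter_add_sum_sdiff B S v
    rw [Finset.inter_comm] at e2
    linarith
  -- tail inequality
  have htail : ∑ j ∈ Bᶜ, |v j| ≤ ∑ t ∈ Aᶜ, |x t| := by
    have e1 : ∑ j ∈ Bᶜ, |v j| = ∑ j, v j - ∑ j ∈ B, v j := by
      have h1 : ∑ j ∈ Bᶜ, |v j| = ∑ j ∈ Bᶜ, v j :=
        Finset.sum_congr rfl fun j _ => abs_of_nonneg (hvnn j)
      have h2 := Finset.sum_compl_add_sum B v
      linarith
    have e2 : ∑ t ∈ Aᶜ, |x t| = ∑ t, x t - ∑ t ∈ A, x t := by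
      have : ∑ t ∈ Aᶜ, |x t| = ∑ t ∈ Aᶜ, x t :=
        Finset.sum_congr rfl fun t _ => abs_of_nonneg (hx t)
      rw [this]
      have := Finset.sum_compl_add_sum A x
      linarith
    rw [e1, e2, htot]
    linarith
  have hknn : (0:ℝ) ≤ 1 / (k:ℝ) := by positivity
  calc (1 / (k : ℝ)) * ∑ j ∈ Bᶜ, |v j| ≤ (1 / (k : ℝ)) * ∑ t ∈ Aᶜ, |x t| :=
        mul_le_mul_of_nonneg_left htail hknn
    _ ≤ x i := hi
    _ ≤ v (f i) := hxiv
end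

section
/- Let n = N₁·N₂ with the bijection π : [n] → [N₁]×[N₂] splitting each index into its first and second parts. For nonnegative x ∈ ℝⁿ define v ∈ ℝ^{N₁} by v_j = Σ_{π(i)₁ = j} x_i and u ∈ ℝ^{N₂} by u_j = Σ_{π(i)₂ = j} x_i. If S₁ ⊆ [N₁] contains all j with v_j ≥ (1/k)‖v₋ₖ‖₁ and S₂ ⊆ [N₂] contains all j with u_j ≥ (1/k)‖u₋ₖ‖₁, then every index i with x_i ≥ (1/k)‖x₋ₖ‖₁ satisfies π(i) ∈ S₁ × S₂. -/
open Finset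

private lemma sum_le_top {β : Type*} [DecidableEq β] (v : β → ℝ)
    (B T : Finset β) (hc : T.card = B.card)
    (htop : ∀ i ∈ B, ∀ j ∉ B, v j ≤ v i) :
    ∑ j ∈ T, v j ≤ ∑ b ∈ B, v b := by
  rw [← Finset.sum_inter_add_sum_sdiff T B v, ← Finset.sum_inter_add_sum_sdiff B T v,
    Finset.inter_comm B T]
  have hcd : (T \ B).card = (B \ T).card := by
    have h1 := Finset.card_sdiff_add_card_inter T B
    have h2 := Finset.card_sdiff_add_card_inter B T
    rw [Finset.inter_comm B T] at h2
    omega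
  have e : (T \ B : Finset β) ≃ (B \ T : Finset β) := Finset.equivOfCardEq hcd
  have key : ∑ j ∈ T \ B, v j ≤ ∑ b ∈ B \ T, v b := by
    rw [← Finset.sum_coe_sort (T \ B) v, ← Finset.sum_coe_sort (B \ T) v,
      ← Equiv.sum_comp e (fun b => v b.1)]
    apply Finset.sum_le_sum
    intro a _
    have ha : (a : β) ∉ B := (Finset.mem_sdiff.1 a.2).2
    have hea : ((e a : β)) ∈ B := (Finset.mem_sdiff.1 (e a).2).1
    exact htop _ hea _ ha
  linarith

private lemma tail_le_tail {α β : Type*} [Fintype α] [Fintype β] [DecidableEq α] [DecidableEq β]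
    (f : α → β) (x : α → ℝ) (hx : ∀ i, 0 ≤ x i)
    (v : β → ℝ) (hv : ∀ j, v j = ∑ i ∈ univ.filter fun i => f i = j, x i)
    (A : Finset α) (B : Finset β) (hcard : B.card = A.card)
    (htop : ∀ i ∈ B, ∀ j ∉ B, |v j| ≤ |v i|) :
    ∑ b ∈ Bᶜ, |v b| ≤ ∑ j ∈ Aᶜ, |x j| := by
  have hv0 : ∀ j, 0 ≤ v j := fun j => by
    rw [hv]; exact Finset.sum_nonneg fun i _ => hx i
  have habsx : ∀ j : α, |x j| = x j := fun j => abs_of_nonneg (hx j)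
  have habsv : ∀ j : β, |v j| = v j := fun j => abs_of_nonneg (hv0 j)
  simp only [habsx, habsv]
  have htot : ∑ j, v j = ∑ i, x i := by
    simp only [hv]
    exact (Finset.sum_fiberwise univ f x)
  have h1 : ∑ b ∈ Bᶜ, v b = ∑ j, v j - ∑ b ∈ B, v b := by
    rw [eq_sub_iff_add_eq, Finset.sum_compl_add_sum]
  have h2 : ∑ j ∈ Aᶜ, x j = ∑ i, x i - ∑ i ∈ A, x i := by
    rw [eq_sub_iff_add_eq, Finset.sum_compl_add_sum]
  rw [h1, h2, htot]
  have key : ∑ i ∈ A, x i ≤ ∑ b ∈ B, v b := by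
    set T := A.image f with hT
    have hTcard : T.card ≤ B.card := hcard ▸ Finset.card_image_le
    obtain ⟨T', hTT', hT'card⟩ :=
      Finset.exists_superset_card_eq hTcard (by simpa using Finset.card_le_univ B)
    have step1 : ∑ i ∈ A, x i ≤ ∑ j ∈ T', v j := by
      simp only [hv]
      rw [Finset.sum_fiberwise_eq_sum_filter univ T' f x]
      apply Finset.sum_le_sum_of_subset_of_nonneg
      · intro i hi
        simp only [Finset.mem_filter, Finset.mem_univ, true_and]
        exact hTT' (Finset.mem_image_of_mem f hi)
      · intro i _ _; exact hx i
    refine step1.trans (sum_le_top v B T' hT'card ?_)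
    intro a ha b hb
    have := htop a ha b hb
    rwa [habsv, habsv] at this
  linarith

theorem stmt16 (N₁ N₂ k : ℕ) (hk : 1 ≤ k)
    (π : Fin (N₁ * N₂) ≃ Fin N₁ × Fin N₂)
    (x : Fin (N₁ * N₂) → ℝ) (hx : ∀ i, 0 ≤ x i)
    (v : Fin N₁ → ℝ) (hv : ∀ j, v j = ∑ i ∈ univ.filter fun i => (π i).1 = j, x i)
    (u : Fin N₂ → ℝ) (hu : ∀ j, u j = ∑ i ∈ univ.filter fun i => (π i).2 = j, x i)
    (A : Finset (Fin (N₁ * N₂))) (hA : A.card = k)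
    (htopA : ∀ i ∈ A, ∀ j ∉ A, |x j| ≤ |x i|)
    (Bv : Finset (Fin N₁)) (hBv : Bv.card = k)
    (htopBv : ∀ i ∈ Bv, ∀ j ∉ Bv, |v j| ≤ |v i|)
    (Bu : Finset (Fin N₂)) (hBu : Bu.card = k)
    (htopBu : ∀ i ∈ Bu, ∀ j ∉ Bu, |u j| ≤ |u i|)
    (S₁ : Finset (Fin N₁)) (hS₁ : ∀ j, (1 / (k : ℝ)) * ∑ b ∈ Bvᶜ, |v b| ≤ v j → j ∈ S₁)
    (S₂ : Finset (Fin N₂)) (hS₂ : ∀ j, (1 / (k : ℝ)) * ∑ b ∈ Buᶜ, |u b| ≤ u j → j ∈ S₂) :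
    ∀ i, (1 / (k : ℝ)) * ∑ j ∈ Aᶜ, |x j| ≤ x i → (π i).1 ∈ S₁ ∧ (π i).2 ∈ S₂ := by
  intro i hi
  have hk0 : (0:ℝ) ≤ 1 / (k:ℝ) := by positivity
  have hxv : x i ≤ v (π i).1 := by
    rw [hv]
    exact Finset.single_le_sum (f := x) (fun j _ => hx j) (by simp)
  have hxu : x i ≤ u (π i).2 := by
    rw [hu]
    exact Finset.single_le_sum (f := x) (fun j _ => hx j) (by simp)
  have h1 := tail_le_tail (fun i => (π i).1) x hx v hv A Bv (by rw [hBv, hA]) htopBv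
  have h2 := tail_le_tail (fun i => (π i).2) x hx u hu A Bu (by rw [hBu, hA]) htopBu
  refine ⟨hS₁ _ (le_trans ?_ hxv), hS₂ _ (le_trans ?_ hxu)⟩
  · calc (1 / (k:ℝ)) * ∑ b ∈ Bvᶜ, |v b| ≤ (1 / (k:ℝ)) * ∑ j ∈ Aᶜ, |x j| :=
        mul_le_mul_of_nonneg_left h1 hk0
      _ ≤ x i := hi
  · calc (1 / (k:ℝ)) * ∑ b ∈ Buᶜ, |u b| ≤ (1 / (k:ℝ)) * ∑ j ∈ Aᶜ, |x j| :=
        mul_le_mul_of_nonneg_left h2 hk0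
      _ ≤ x i := hi
end
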